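/- Decomposition of a bipartite unitary superoperator via rank-2 combinations: if U = Σᵢ λᵢ Λᵢ with λᵢ ≥ 0 (viewing Λᵢ = Aᵢ ⊗ Bᵢ), then Ũ := U ⊗ conj(U) = Σᵢ λᵢ² (Λᵢ ⊗ conj(Λᵢ)) + 2 Σ_{i>j} λᵢλⱼ (Π^{(+)}_{i,j} ⊗ conj(Π^{(+)}_{i,j}) − Π^{(−)}_{i,j} ⊗ conj(Π^{(−)}_{i,j})), where Π^{(±)}_{i,j} = (Λᵢ ± Λⱼ)/2. -/

import Mathlib

/-
Write `B X Y = X ⊗ conj Y`, which is ℝ-bilinear, so `Ũ = B U U`. Expanding `B U U` bilinearly gives the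
diagonal terms `λᵢ² B Λᵢ Λᵢ` and, for each pair `j < i`, the cross terms `λᵢ λⱼ (B Λᵢ Λⱼ + B Λⱼ Λᵢ)`.
The rank-2 identity `B x y + B y x = 2 (B Π⁺ Π⁺ - B Π⁻ Π⁻)` with `Π^± = (x ± y)/2` is polarization for
the bilinear map `B`.
-/

open Kronecker Finset

theorem Finset.sum_sum_eq_sum_diag_add_sum_Iio {ι M : Type*} [Fintype ι] [LinearOrder ι]
    [LocallyFiniteOrderBot ι] [LocallyFiniteOrderTop ι] [AddCommMonoid M] (f : ι → ι → M) :
    ∑ i, ∑ j, f i j = ∑ i, f i i + ∑ i, ∑ j ∈ Iio i, (f i j + f j i) := by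
  have hrow (i : ι) : ∑ j, f i j = f i i + (∑ j ∈ Ioi i, f i j + ∑ j ∈ Iio i, f i j) := by
    rw [Fintype.sum_eq_add_sum_compl i, ← Ioi_disjUnion_Iio, sum_disjUnion]
  have hIoi : ∑ i, ∑ j ∈ Ioi i, f i j = ∑ i, ∑ j ∈ Iio i, f j i :=
    sum_comm' fun _ _ => by simp
  simp only [hrow, sum_add_distrib, hIoi]
  abel

namespace LinearMap

variable {ι 𝕜 M P : Type*} [Fintype ι] [LinearOrder ι] [LocallyFiniteOrderBot ι]
  [LocallyFiniteOrderTop ι]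

theorem apply_sum_smul_sum_smul {R : Type*} [CommSemiring R] [AddCommMonoid M] [Module R M]
    [AddCommMonoid P] [Module R P] (B : M →ₗ[R] M →ₗ[R] P) (l : ι → R) (x : ι → M) :
    B (∑ i, l i • x i) (∑ i, l i • x i)
      = ∑ i, l i ^ 2 • B (x i) (x i)
        + ∑ i, ∑ j ∈ Iio i, (l i * l j) • (B (x i) (x j) + B (x j) (x i)) := by
  simp only [map_sum, map_smul, sum_apply, smul_apply, smul_sum]
  rw [sum_sum_eq_sum_diag_add_sum_Iio]
  simp only [smul_add, smul_smul, sq, mul_comm (l _) (l _), add_comm]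

variable [Field 𝕜] [AddCommGroup M] [Module 𝕜 M] [AddCommGroup P] [Module 𝕜 P]

theorem add_swap_eq_two_smul_sub [NeZero (2 : 𝕜)] (B : M →ₗ[𝕜] M →ₗ[𝕜] P) (x y : M) :
    B x y + B y x = (2 : 𝕜) • (B ((1 / 2 : 𝕜) • (x + y)) ((1 / 2 : 𝕜) • (x + y))
      - B ((1 / 2 : 𝕜) • (x - y)) ((1 / 2 : 𝕜) • (x - y))) := by
  simp only [map_smul, map_add, map_sub, smul_apply, add_apply, sub_apply]
  match_scalars <;> field_simp <;> ring

theorem apply_sum_smul_sum_smul_polarized [NeZero (2 : 𝕜)] (B : M →ₗ[𝕜] M →ₗ[𝕜] P)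
    (l : ι → 𝕜) (x : ι → M) :
    B (∑ i, l i • x i) (∑ i, l i • x i)
      = ∑ i, l i ^ 2 • B (x i) (x i)
        + (2 : 𝕜) • ∑ i, ∑ j ∈ Iio i, (l i * l j) •
            (B ((1 / 2 : 𝕜) • (x i + x j)) ((1 / 2 : 𝕜) • (x i + x j))
              - B ((1 / 2 : 𝕜) • (x i - x j)) ((1 / 2 : 𝕜) • (x i - x j))) := by
  simp only [apply_sum_smul_sum_smul, smul_sum, smul_comm (2 : 𝕜),
    ← add_swap_eq_two_smul_sub]

end LinearMap

theorem stmt_15_general (n K : ℕ) (l : Fin K → ℝ)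
    (Λ : Fin K → Matrix (Fin n) (Fin n) ℂ)
    (U : Matrix (Fin n) (Fin n) ℂ) (hU : U = ∑ i, l i • Λ i) :
    U ⊗ₖ (U.map (starRingEnd ℂ))
      = (∑ i, (l i)^2 • (Λ i ⊗ₖ ((Λ i).map (starRingEnd ℂ))))
        + (2:ℝ) • ∑ i, ∑ j ∈ Finset.Iio i, (l i * l j) •
            (((1/2 : ℂ) • (Λ i + Λ j)) ⊗ₖ (((1/2 : ℂ) • (Λ i + Λ j)).map (starRingEnd ℂ))
              - ((1/2 : ℂ) • (Λ i - Λ j)) ⊗ₖ (((1/2 : ℂ) • (Λ i - Λ j)).map (starRingEnd ℂ))) := by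
  let B : Matrix (Fin n) (Fin n) ℂ →ₗ[ℝ] Matrix (Fin n) (Fin n) ℂ →ₗ[ℝ]
      Matrix (Fin n × Fin n) (Fin n × Fin n) ℂ :=
    (Matrix.kroneckerBilinear (R := ℝ) (α := ℂ)).compl₂ Complex.conjAe.toLinearMap.mapMatrix
  have half_smul (A : Matrix (Fin n) (Fin n) ℂ) : (1 / 2 : ℂ) • A = (1 / 2 : ℝ) • A := by
    rw [← Complex.coe_smul]
    norm_num
  subst hU
  simp only [half_smul]
  exact B.apply_sum_smul_sum_smul_polarized l Λ

/-- Decomposition of the superoperator `Ũ = U ⊗ conj U` of `U = Σᵢ λᵢ Λᵢ`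
into diagonal terms and rank-2 combinations `Π^{(±)}_{i,j} = (Λᵢ ± Λⱼ)/2`. -/
theorem stmt_15 (n K : ℕ) (l : Fin K → ℝ) (hl : ∀ i, 0 ≤ l i)
    (Λ : Fin K → Matrix (Fin n) (Fin n) ℂ)
    (U : Matrix (Fin n) (Fin n) ℂ) (hU : U = ∑ i, l i • Λ i) :
    U ⊗ₖ (U.map (starRingEnd ℂ))
      = (∑ i, (l i)^2 • (Λ i ⊗ₖ ((Λ i).map (starRingEnd ℂ))))
        + (2:ℝ) • ∑ i, ∑ j ∈ Finset.Iio i, (l i * l j) •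
            (((1/2 : ℂ) • (Λ i + Λ j)) ⊗ₖ (((1/2 : ℂ) • (Λ i + Λ j)).map (starRingEnd ℂ))
              - ((1/2 : ℂ) • (Λ i - Λ j)) ⊗ₖ (((1/2 : ℂ) • (Λ i - Λ j)).map (starRingEnd ℂ))) :=
  stmt_15_general n K l Λ U hU
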